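/- arXiv:2403.09956 — 2 statements merged into one kernel-verified Lean document; each statement's English description precedes it below -/
import Mathlib

section
/- Let J ≥ 2 and let α̃ ∈ S^{J-1}. Let (α_K) be reals with α_K > J for all K, α_K → ∞ and α_K/K → 0 as K → ∞. For each K let Π_K be a random vector taking values in S^{J-1} such that √(α_K)·(Π_K − (α_K·α̃ − 1_J)/(α_K − J)) converges in distribution to N(0, diag(α̃) − α̃α̃ᵀ) (this hypothesis holds when Π_K ~ Dirichlet(α_K·α̃) with each α_K·α̃_j > 1, by the asymptotic normality of the Dirichlet distribution around its mode). Let U_1, …, U_K be i.i.d. Uniform(0,1) random variables independent of Π_K and define T_{Kj} = Σ_{k=1}^K 1(U_k ∈ P_j(Π_K)). Then (√(α_K + 1)/K)(T_K − K·α̃) converges in distribution to N(0, diag(α̃) − α̃α̃ᵀ). -/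
open MeasureTheory ProbabilityTheory Filter Topology

noncomputable section

/-- The `j`-th interval `P_j(h)` of the partition of `[0,1]` induced by `h ∈ S^{J-1}`:
`P_1(h) = [0, h_1]` and `P_j(h) = (h_1 + ⋯ + h_{j-1}, h_1 + ⋯ + h_j]` for `j ≥ 2`. -/
def Pint {J : ℕ} (h : Fin J → ℝ) (j : Fin J) : Set ℝ :=
  if j.val = 0 then Set.Icc 0 (∑ ℓ ∈ Finset.Iic j, h ℓ)
  else Set.Ioc (∑ ℓ ∈ Finset.Iio j, h ℓ) (∑ ℓ ∈ Finset.Iic j, h ℓ)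

open Classical in
/-- The conditionally multinomial count vector `T_K`:
`T_{Kj} = ∑_{k=1}^K 1(U_k ∈ P_j(Π))`. -/
def countVec {Ω : Type*} {J : ℕ} (K : ℕ) (U : ℕ → Ω → ℝ) (Pi : Ω → Fin J → ℝ)
    (ω : Ω) (j : Fin J) : ℝ :=
  ∑ k ∈ Finset.range K, if U k ω ∈ Pint (Pi ω) j then 1 else 0

/-- Convergence in distribution (weak convergence of the laws): the expectations of every
bounded continuous function converge. -/
def TendstoInDistr {Ω E : Type*} [MeasurableSpace Ω] [MeasurableSpace E] [TopologicalSpace E]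
    (Pr : Measure Ω) (X : ℕ → Ω → E) (D : Measure E) : Prop :=
  ∀ f : BoundedContinuousFunction E ℝ,
    Tendsto (fun K => ∫ ω, f (X K ω) ∂Pr) atTop (𝓝 (∫ x, f x ∂D))

/-- `D` is the centered multivariate normal distribution `N(0, S)`: every linear functional
`x ↦ tᵀx` pushes `D` forward to the real Gaussian with mean `0` and variance `tᵀSt`. -/
def IsCenteredGaussian {ι : Type*} [Fintype ι] (D : Measure (ι → ℝ)) (S : Matrix ι ι ℝ) : Prop :=
  IsProbabilityMeasure D ∧
    ∀ t : ι → ℝ, D.map (fun x => ∑ i, t i * x i) =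
      gaussianReal 0 (Real.toNNReal (∑ i, ∑ i', t i * S i i' * t i'))

/-! Write `X_K = √(α_K + 1)/K · (T_K − K·α̃)` as `c_K • Y_K + b_K + W_K`, where
`Y_K = √α_K (Π_K − (α_K·α̃ − 1_J)/(α_K − J))` is the rescaled mixing vector,
`c_K = √(α_K + 1)/√α_K → 1`, `b_K = √(α_K + 1)(J·α̃ − 1_J)/(α_K − J) → 0` is a deterministic
bias, and `W_K = √(α_K + 1)/K · (T_K − K·Π_K)` is the multinomial noise. Freezing `Π_K = h` by
independence, `T_{Kj}` is a sum of `K` independent indicators of probability `h_j`, so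
`E W_{Kj}² ≤ (α_K + 1)/(4K) → 0`. Hence `W_K → 0` in probability, and Slutsky's theorem hands
the limit of `Y_K` over to `X_K`: the fluctuations of the mixing vector dominate. -/

section Distribution

variable {Ω E : Type*} [MeasurableSpace Ω] {μ : Measure Ω} [IsProbabilityMeasure μ]
  [MeasurableSpace E]

theorem TendstoInDistr.isProbabilityMeasure [TopologicalSpace E] {X : ℕ → Ω → E}
    {D : Measure E} (h : TendstoInDistr μ X D) : IsProbabilityMeasure D := by
  have h1 := h (BoundedContinuousFunction.const E 1)
  simp only [BoundedContinuousFunction.const_apply, integral_const, probReal_univ, smul_eq_mul,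
    mul_one] at h1
  have hD : D.real Set.univ = 1 := tendsto_nhds_unique tendsto_const_nhds h1 |>.symm
  exact ⟨(ENNReal.toReal_eq_one_iff _).mp hD⟩

theorem tendstoInDistr_iff_tendstoInDistribution [TopologicalSpace E] [OpensMeasurableSpace E]
    {X : ℕ → Ω → E} (hX : ∀ K, AEMeasurable (X K) μ) {D : Measure E} [IsProbabilityMeasure D] :
    TendstoInDistr μ X D ↔ TendstoInDistribution X atTop id (fun _ => μ) D := by
  have hlaw : ∀ (f : BoundedContinuousFunction E ℝ) K,
      ∫ x, f x ∂(μ.map (X K)) = ∫ ω, f (X K ω) ∂μ := fun f K =>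
    integral_map (hX K) f.continuous.aestronglyMeasurable
  constructor
  · intro h
    refine ⟨hX, aemeasurable_id, ProbabilityMeasure.tendsto_iff_forall_integral_tendsto.mpr
      fun f => ?_⟩
    simpa [hlaw] using h f
  · intro h f
    simpa [hlaw] using ProbabilityMeasure.tendsto_iff_forall_integral_tendsto.mp h.tendsto f

end Distribution

namespace MeasureTheory

variable {ι Ω E : Type*} [MeasurableSpace Ω] {μ : Measure Ω} {l : Filter ι}

theorem tendstoInMeasure_const_of_tendsto [PseudoEMetricSpace E] {x : ι → E} {y : E}
    (h : Tendsto x l (𝓝 y)) : TendstoInMeasure μ (fun i (_ : Ω) => x i) l (fun _ => y) := by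
  intro ε hε
  refine tendsto_const_nhds.congr' ?_
  filter_upwards [h (Metric.eball_mem_nhds y hε)] with i hi
  simp [not_le.mpr (Metric.mem_eball.mp hi)]

theorem TendstoInDistribution.smul_add_of_tendsto {Ω' : Type*} [MeasurableSpace Ω']
    {μ' : Measure Ω'} [IsProbabilityMeasure μ'] [IsProbabilityMeasure μ]
    [NormedAddCommGroup E] [NormedSpace ℝ E]
    [MeasurableSpace E] [BorelSpace E] [SecondCountableTopology E] [l.IsCountablyGenerated]
    {X : ι → Ω → E} {Z : Ω' → E} (h : TendstoInDistribution X l Z (fun _ => μ) μ')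
    {c : ι → ℝ} {b : ι → E} (hc : Tendsto c l (𝓝 1)) (hb : Tendsto b l (𝓝 0)) :
    TendstoInDistribution (fun i ω => c i • X i ω + b i) l Z (fun _ => μ) μ' := by
  refine (h.continuous_comp_prodMk_of_tendstoInMeasure_const
    (g := fun p : E × (ℝ × E) => p.2.1 • p.1 + p.2.2) (by fun_prop)
    (tendstoInMeasure_const_of_tendsto (hc.prodMk_nhds hb))
    (fun _ => aemeasurable_const)).congr (fun _ => .rfl) (ae_of_all _ fun ω => ?_)
  simp

theorem tendstoInMeasure_pi {κ : Type*} [Fintype κ] {F : κ → Type*}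
    [∀ j, PseudoEMetricSpace (F j)] {f : ι → Ω → (j : κ) → F j} {g : Ω → (j : κ) → F j}
    (h : ∀ j, TendstoInMeasure μ (fun i ω => f i ω j) l (fun ω => g ω j)) :
    TendstoInMeasure μ f l g := by
  intro ε hε
  have hle : ∀ i, μ {ω | ε ≤ edist (f i ω) (g ω)} ≤ ∑ j, μ {ω | ε ≤ edist (f i ω j) (g ω j)} := by
    intro i
    refine (measure_mono fun ω (hω : ε ≤ edist (f i ω) (g ω)) => ?_).trans
      (measure_iUnion_fintype_le μ _)
    rw [edist_pi_def, Finset.le_sup_iff hε] at hω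
    obtain ⟨j, -, hj⟩ := hω
    exact Set.mem_iUnion.2 ⟨j, hj⟩
  have hsum := tendsto_finsetSum Finset.univ fun j _ => h j ε hε
  rw [Finset.sum_const_zero] at hsum
  exact tendsto_of_tendsto_of_tendsto_of_le_of_le tendsto_const_nhds hsum (fun _ => zero_le) hle

theorem tendstoInMeasure_zero_of_integral_sq_le [IsFiniteMeasure μ] {f : ι → Ω → ℝ} {b : ι → ℝ}
    (hf : ∀ i, Integrable (fun ω => f i ω ^ 2) μ) (hfb : ∀ i, ∫ ω, f i ω ^ 2 ∂μ ≤ b i)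
    (hb : Tendsto b l (𝓝 0)) :
    TendstoInMeasure μ f l 0 := by
  rw [tendstoInMeasure_iff_measureReal_norm]
  intro ε hε
  have hcheb : ∀ i, μ.real {ω | ε ≤ ‖f i ω - (0 : Ω → ℝ) ω‖} ≤ b i / ε ^ 2 := by
    intro i
    have hset : {ω | ε ≤ ‖f i ω - (0 : Ω → ℝ) ω‖} = {ω | ε ^ 2 ≤ f i ω ^ 2} := by
      ext ω
      rw [Set.mem_ofPred_eq, Set.mem_ofPred_eq, Pi.zero_apply, sub_zero, Real.norm_eq_abs,
        ← sq_abs (f i ω), sq_le_sq₀ hε.le (abs_nonneg _)]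
    rw [hset, le_div_iff₀ (by positivity), mul_comm]
    exact (mul_meas_ge_le_integral_of_nonneg (ae_of_all _ fun ω => sq_nonneg _) (hf i) _).trans
      (hfb i)
  have hb' : Tendsto (fun i => b i / ε ^ 2) l (𝓝 0) := by simpa using hb.div_const (ε ^ 2)
  exact squeeze_zero (fun _ => measureReal_nonneg) hcheb hb'

end MeasureTheory

theorem ProbabilityTheory.IndepFun.integral_comp_eq_integral_integral {Ω β γ : Type*}
    [MeasurableSpace Ω] {μ : Measure Ω} [IsFiniteMeasure μ]
    [MeasurableSpace β] [MeasurableSpace γ] {V : Ω → β} {P : Ω → γ}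
    (hVP : IndepFun V P μ) (hV : Measurable V) (hP : Measurable P)
    {F : β → γ → ℝ} (hF : Measurable (Function.uncurry F))
    (hint : Integrable (fun ω => F (V ω) (P ω)) μ) :
    ∫ ω, F (V ω) (P ω) ∂μ = ∫ ω', ∫ ω, F (V ω) (P ω') ∂μ ∂μ := by
  have hlaw : μ.map (fun ω => (V ω, P ω)) = (μ.map V).prod (μ.map P) :=
    (indepFun_iff_map_prod_eq_prod_map_map hV.aemeasurable hP.aemeasurable).mp hVP
  have hint' : Integrable (Function.uncurry F) ((μ.map V).prod (μ.map P)) := by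
    rw [← hlaw]
    exact (integrable_map_measure hF.aestronglyMeasurable
      (hV.prodMk hP).aemeasurable).mpr hint
  calc ∫ ω, F (V ω) (P ω) ∂μ
      = ∫ p, Function.uncurry F p ∂((μ.map V).prod (μ.map P)) := by
        rw [← hlaw, integral_map (hV.prodMk hP).aemeasurable hF.aestronglyMeasurable]
        rfl
    _ = ∫ y, ∫ x, F x y ∂(μ.map V) ∂(μ.map P) := integral_prod_symm _ hint'
    _ = ∫ ω', ∫ ω, F (V ω) (P ω') ∂μ ∂μ := by
        rw [integral_map hP.aemeasurable]
        · refine integral_congr_ae (ae_of_all _ fun ω' => ?_)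
          exact integral_map hV.aemeasurable
            (hF.comp (measurable_id.prodMk measurable_const)).aestronglyMeasurable
        · exact (hF.stronglyMeasurable.integral_prod_left' ..).aestronglyMeasurable

theorem integral_sq_sum_indicator_sub_le {Ω α : Type*} [MeasurableSpace Ω] {μ : Measure Ω}
    [IsProbabilityMeasure μ] [MeasurableSpace α] {U : ℕ → Ω → α} (hU : ∀ k, Measurable (U k))
    (hind : iIndepFun U μ) {ν : Measure α} (hlaw : ∀ k, μ.map (U k) = ν)
    {A : Set α} (hA : MeasurableSet A) (K : ℕ) :
    ∫ ω, (∑ k ∈ Finset.range K, A.indicator (1 : α → ℝ) (U k ω) - K * ν.real A) ^ 2 ∂μ ≤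
      K / 4 := by
  set X : ℕ → Ω → ℝ := fun k => A.indicator 1 ∘ U k
  have hf : Measurable (A.indicator (1 : α → ℝ)) := measurable_one.indicator hA
  have hX01 : ∀ k ω, X k ω ∈ Set.Icc (0 : ℝ) 1 := fun k ω => by
    by_cases h : U k ω ∈ A <;> simp [X, h]
  have hXm : ∀ k, Measurable (X k) := fun k => hf.comp (hU k)
  have hXL2 : ∀ k, MemLp (X k) 2 μ := fun k =>
    MemLp.of_bound (hXm k).aestronglyMeasurable 1 (ae_of_all _ fun ω => by
      rw [Real.norm_eq_abs, abs_of_nonneg (hX01 k ω).1]; exact (hX01 k ω).2)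
  have hmean : ∫ ω, ∑ k ∈ Finset.range K, X k ω ∂μ = K * ν.real A := by
    rw [integral_finsetSum _ fun k _ => (hXL2 k).integrable one_le_two]
    have hk : ∀ k, ∫ ω, X k ω ∂μ = ν.real A := fun k => by
      rw [← hlaw k, ← integral_indicator_one hA, integral_map (hU k).aemeasurable
        hf.aestronglyMeasurable]
      rfl
    simp [hk]
  calc ∫ ω, (∑ k ∈ Finset.range K, A.indicator 1 (U k ω) - K * ν.real A) ^ 2 ∂μ
      = Var[∑ k ∈ Finset.range K, X k; μ] := by
        rw [Finset.sum_fn, variance_eq_integral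
          (Finset.measurable_sum _ fun k _ => hXm k).aemeasurable, hmean]
        simp [X]
    _ = ∑ k ∈ Finset.range K, Var[X k; μ] :=
        IndepFun.variance_sum (fun k _ => hXL2 k)
          fun k _ l _ hkl => (hind.indepFun hkl).comp hf hf
    _ ≤ ∑ _k ∈ Finset.range K, ((1 - 0) / 2 : ℝ) ^ 2 :=
        Finset.sum_le_sum fun k _ =>
          variance_le_sq_of_bounded (ae_of_all _ (hX01 k)) (hXm k).aemeasurable
    _ = K / 4 := by rw [Finset.sum_const, Finset.card_range, nsmul_eq_mul]; norm_num; ring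

section Limits

variable {ι : Type*} {l : Filter ι} {a : ι → ℝ}

theorem tendsto_sqrt_add_one_div_sqrt (ha : Tendsto a l atTop) :
    Tendsto (fun i => √(a i + 1) / √(a i)) l (𝓝 1) := by
  have h : Tendsto (fun i => √(1 + (a i)⁻¹)) l (𝓝 1) := by
    simpa using ((tendsto_const_nhds (x := (1 : ℝ))).add ha.inv_tendsto_atTop).sqrt
  refine h.congr' ?_
  filter_upwards [ha.eventually_gt_atTop 0] with i hi
  rw [← Real.sqrt_div' _ hi.le, add_div, div_self hi.ne', one_div, add_comm]

theorem tendsto_sqrt_add_one_div_sub (ha : Tendsto a l atTop) (c : ℝ) :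
    Tendsto (fun i => √(a i + 1) / (a i - c)) l (𝓝 0) := by
  have hsqrt : Tendsto (fun i => (√(a i + 1))⁻¹) l (𝓝 0) :=
    (Real.tendsto_sqrt_atTop.comp (tendsto_atTop_add_const_right _ 1 ha)).inv_tendsto_atTop
  have hratio : Tendsto (fun i => 1 + (c + 1) / (a i - c)) l (𝓝 1) := by
    simpa [sub_eq_add_neg] using tendsto_const_nhds.add
      (tendsto_const_nhds.div_atTop (tendsto_atTop_add_const_right _ (-c) ha))
  have h := hsqrt.mul hratio
  rw [zero_mul] at h
  refine h.congr' ?_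
  filter_upwards [ha.eventually_gt_atTop (max c 0)] with i hi
  have hc : a i - c ≠ 0 := sub_ne_zero.mpr (lt_of_le_of_lt (le_max_left _ _) hi).ne'
  have hs : √(a i + 1) ≠ 0 := (Real.sqrt_pos.mpr (by linarith [le_max_right c 0])).ne'
  field_simp
  rw [Real.sq_sqrt (by linarith [le_max_right c 0])]
  ring

end Limits

section Partition

variable {J : ℕ}

theorem sum_Iic_eq_sum_Iio_add (h : Fin J → ℝ) (j : Fin J) :
    ∑ ℓ ∈ Finset.Iic j, h ℓ = ∑ ℓ ∈ Finset.Iio j, h ℓ + h j := by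
  rw [Finset.Iic_eq_cons_Iio, Finset.sum_cons, add_comm]

theorem Pint_subset_Icc {h : Fin J → ℝ} (hh : h ∈ stdSimplex ℝ (Fin J)) (j : Fin J) :
    Pint h j ⊆ Set.Icc 0 1 := by
  have hle : ∀ s : Finset (Fin J), ∑ ℓ ∈ s, h ℓ ≤ 1 := fun s =>
    hh.2 ▸ Finset.sum_le_sum_of_subset_of_nonneg s.subset_univ fun i _ _ => hh.1 i
  unfold Pint
  split_ifs
  · exact Set.Icc_subset_Icc le_rfl (hle _)
  · exact Set.Ioc_subset_Icc_self.trans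
      (Set.Icc_subset_Icc (Finset.sum_nonneg fun i _ => hh.1 i) (hle _))

theorem measurableSet_mem_Pint (j : Fin J) :
    MeasurableSet {p : ℝ × (Fin J → ℝ) | p.1 ∈ Pint p.2 j} := by
  have hIic : Measurable fun p : ℝ × (Fin J → ℝ) => ∑ ℓ ∈ Finset.Iic j, p.2 ℓ := by fun_prop
  have hIio : Measurable fun p : ℝ × (Fin J → ℝ) => ∑ ℓ ∈ Finset.Iio j, p.2 ℓ := by fun_prop
  unfold Pint
  split_ifs
  · exact (measurableSet_le measurable_const measurable_fst).inter
      (measurableSet_le measurable_fst hIic)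
  · exact (measurableSet_lt hIio measurable_fst).inter (measurableSet_le measurable_fst hIic)

theorem measurable_indicator_Pint {β : Type*} [MeasurableSpace β] {u : β → ℝ}
    {p : β → Fin J → ℝ} (hu : Measurable u) (hp : Measurable p) (j : Fin J) :
    Measurable fun b => (Pint (p b) j).indicator (1 : ℝ → ℝ) (u b) :=
  (measurable_one.indicator (measurableSet_mem_Pint j)).comp (hu.prodMk hp)

theorem measurableSet_Pint (h : Fin J → ℝ) (j : Fin J) : MeasurableSet (Pint h j) :=
  measurableSet_mem_Pint j |>.preimage (measurable_id.prodMk measurable_const)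

theorem volume_Pint (h : Fin J → ℝ) (j : Fin J) :
    volume (Pint h j) = ENNReal.ofReal (h j) := by
  unfold Pint
  split_ifs with hj
  · have hIio : Finset.Iio j = ∅ := Finset.Iio_eq_empty.mpr fun b _ => by simp [Fin.le_def, hj]
    rw [Real.volume_Icc, sum_Iic_eq_sum_Iio_add, hIio, Finset.sum_empty, zero_add, sub_zero]
  · rw [Real.volume_Ioc, sum_Iic_eq_sum_Iio_add, add_sub_cancel_left]

theorem measureReal_restrict_Icc_Pint {h : Fin J → ℝ} (hh : h ∈ stdSimplex ℝ (Fin J)) (j : Fin J) :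
    (volume.restrict (Set.Icc (0 : ℝ) 1)).real (Pint h j) = h j := by
  rw [measureReal_def, Measure.restrict_apply (measurableSet_Pint h j),
    Set.inter_eq_left.mpr (Pint_subset_Icc hh j), volume_Pint h j, ENNReal.toReal_ofReal (hh.1 j)]

end Partition

section CountVec

variable {Ω : Type*} {J K : ℕ}

theorem countVec_eq_sum_indicator (U : ℕ → Ω → ℝ) (P : Ω → Fin J → ℝ) (ω : Ω) (j : Fin J) :
    countVec K U P ω j = ∑ k ∈ Finset.range K, (Pint (P ω) j).indicator 1 (U k ω) := by
  rfl

theorem measurable_countVec [MeasurableSpace Ω] {U : ℕ → Ω → ℝ} (hU : ∀ k, Measurable (U k))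
    {P : Ω → Fin J → ℝ} (hP : Measurable P) : Measurable (countVec K U P) := by
  refine measurable_pi_lambda _ fun j => ?_
  simp_rw [countVec_eq_sum_indicator]
  exact Finset.measurable_sum _ fun k _ => measurable_indicator_Pint (hU k) hP j

theorem abs_sum_indicator_Pint_sub_le {h : Fin J → ℝ} (hh : h ∈ stdSimplex ℝ (Fin J))
    (j : Fin J) (u : ℕ → ℝ) :
    |∑ k ∈ Finset.range K, (Pint h j).indicator 1 (u k) - K * h j| ≤ K := by
  have hind : ∀ x, (Pint h j).indicator (1 : ℝ → ℝ) x ∈ Set.Icc 0 1 := fun x => by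
    by_cases hx : x ∈ Pint h j <;> simp [hx]
  have hj := mem_Icc_of_mem_stdSimplex hh j
  refine abs_sub_le_of_nonneg_of_le (Finset.sum_nonneg fun k _ => (hind _).1) ?_
    (by positivity [hj.1]) (mul_le_of_le_one_right K.cast_nonneg hj.2)
  simpa using Finset.sum_le_card_nsmul (Finset.range K) _ 1 fun k _ => (hind (u k)).2

theorem integrable_sq_countVec_sub [MeasurableSpace Ω] {μ : Measure Ω} [IsFiniteMeasure μ]
    {U : ℕ → Ω → ℝ} (hU : ∀ k, Measurable (U k)) {P : Ω → Fin J → ℝ} (hP : Measurable P)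
    (hPval : ∀ ω, P ω ∈ stdSimplex ℝ (Fin J)) (j : Fin J) :
    Integrable (fun ω => (countVec K U P ω j - K * P ω j) ^ 2) μ := by
  have hT := measurable_countVec (K := K) hU hP
  refine Integrable.of_bound (by fun_prop) (K ^ 2) (ae_of_all _ fun ω => ?_)
  rw [Real.norm_of_nonneg (sq_nonneg _), ← sq_abs, countVec_eq_sum_indicator]
  exact pow_le_pow_left₀ (abs_nonneg _) (abs_sum_indicator_Pint_sub_le (hPval ω) j _) 2

theorem integral_sq_countVec_sub_le [MeasurableSpace Ω] {μ : Measure Ω} [IsProbabilityMeasure μ]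
    {U : ℕ → Ω → ℝ} (hU : ∀ k, Measurable (U k))
    (hUunif : ∀ k, μ.map (U k) = volume.restrict (Set.Icc (0 : ℝ) 1)) (hUiid : iIndepFun U μ)
    {P : Ω → Fin J → ℝ} (hP : Measurable P) (hPval : ∀ ω, P ω ∈ stdSimplex ℝ (Fin J))
    (hUP : IndepFun (fun ω k => U k ω) P μ) (j : Fin J) :
    ∫ ω, (countVec K U P ω j - K * P ω j) ^ 2 ∂μ ≤ K / 4 := by
  set F : (ℕ → ℝ) → (Fin J → ℝ) → ℝ := fun v h =>
    (∑ k ∈ Finset.range K, (Pint h j).indicator 1 (v k) - K * h j) ^ 2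
  have hF : Measurable (Function.uncurry F) :=
    ((Finset.measurable_sum _ fun k _ => measurable_indicator_Pint
      ((measurable_pi_apply k).comp measurable_fst) measurable_snd j).sub
      (measurable_const.mul ((measurable_pi_apply j).comp measurable_snd))).pow_const 2
  have hV : Measurable fun ω k => U k ω := measurable_pi_lambda _ hU
  have hint : Integrable (fun ω => F (fun k => U k ω) (P ω)) μ := by
    simpa only [F, countVec_eq_sum_indicator] using integrable_sq_countVec_sub hU hP hPval j
  simp_rw [countVec_eq_sum_indicator]
  rw [hUP.integral_comp_eq_integral_integral hV hP hF hint]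
  calc ∫ ω', ∫ ω, F (fun k => U k ω) (P ω') ∂μ ∂μ
      ≤ ∫ _ω', (K / 4 : ℝ) ∂μ := by
        refine integral_mono_of_nonneg (ae_of_all _ fun _ => integral_nonneg fun _ => sq_nonneg _)
          (integrable_const _) (ae_of_all _ fun ω' => ?_)
        have := integral_sq_sum_indicator_sub_le hU hUiid hUunif (measurableSet_Pint (P ω') j) K
        rwa [measureReal_restrict_Icc_Pint (hPval ω') j] at this
    _ = K / 4 := by simp

end CountVec

theorem tendstoInMeasure_scaled_countVec_sub {Ω : Type*} [MeasurableSpace Ω] {μ : Measure Ω}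
    [IsProbabilityMeasure μ] {J : ℕ} {U : ℕ → ℕ → Ω → ℝ} (hU : ∀ K k, Measurable (U K k))
    (hUunif : ∀ K k, μ.map (U K k) = volume.restrict (Set.Icc (0 : ℝ) 1))
    (hUiid : ∀ K, iIndepFun (U K) μ) {P : ℕ → Ω → Fin J → ℝ} (hP : ∀ K, Measurable (P K))
    (hPval : ∀ K ω, P K ω ∈ stdSimplex ℝ (Fin J))
    (hUP : ∀ K, IndepFun (fun ω k => U K k ω) (P K) μ)
    {s : ℕ → ℝ} (hs : Tendsto (fun K : ℕ => s K ^ 2 / K) atTop (𝓝 0)) :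
    TendstoInMeasure μ (fun K ω j => s K / K * (countVec K (U K) (P K) ω j - K * P K ω j))
      atTop 0 := by
  refine tendstoInMeasure_pi fun j => tendstoInMeasure_zero_of_integral_sq_le
    (b := fun K : ℕ => s K ^ 2 / K / 4) (fun K => ?_) (fun K => ?_) (by simpa using hs.div_const 4)
  · simp_rw [mul_pow]
    exact (integrable_sq_countVec_sub (hU K) (hP K) (hPval K) j).const_mul _
  · simp_rw [mul_pow]
    rw [integral_const_mul]
    calc (s K / K) ^ 2 * ∫ ω, (countVec K (U K) (P K) ω j - K * P K ω j) ^ 2 ∂μ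
        ≤ (s K / K) ^ 2 * (K / 4) := mul_le_mul_of_nonneg_left
          (integral_sq_countVec_sub_le (hU K) (hUunif K) (hUiid K) (hP K) (hPval K) (hUP K) j)
          (sq_nonneg _)
      _ = s K ^ 2 / K / 4 := by
        rcases eq_or_ne (K : ℝ) 0 with hK | hK
        · simp [hK]
        · field_simp

theorem dirichlet_multinomial_clt_mixing_dominates_general
    {Ω : Type*} [MeasurableSpace Ω] (Pr : Measure Ω) [IsProbabilityMeasure Pr]
    (J : ℕ) (α : Fin J → ℝ)
    (a : ℕ → ℝ) (ha : ∀ K, (J : ℝ) < a K)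
    (hatop : Tendsto a atTop atTop)
    (haK : Tendsto (fun K : ℕ => a K / K) atTop (𝓝 0))
    (Pi : ℕ → Ω → Fin J → ℝ) (hPimeas : ∀ K, Measurable (Pi K))
    (hPival : ∀ K ω, Pi K ω ∈ stdSimplex ℝ (Fin J))
    (D : Measure (Fin J → ℝ))
    (hPiconv : TendstoInDistr Pr
      (fun K ω j => Real.sqrt (a K) * (Pi K ω j - (a K * α j - 1) / (a K - J))) D)
    (U : ℕ → ℕ → Ω → ℝ) (hUmeas : ∀ K k, Measurable (U K k))
    (hUunif : ∀ K k, Pr.map (U K k) = volume.restrict (Set.Icc (0:ℝ) 1))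
    (hUiid : ∀ K, iIndepFun (U K) Pr)
    (hUPiindep : ∀ K, IndepFun (fun ω k => U K k ω) (Pi K) Pr) :
    TendstoInDistr Pr
      (fun K ω j =>
        Real.sqrt (a K + 1) / K * (countVec K (U K) (Pi K) ω j - K * α j)) D := by
  have := hPiconv.isProbabilityMeasure
  have hYconv := (tendstoInDistr_iff_tendstoInDistribution (fun K => by
    have := hPimeas K; fun_prop)).mp hPiconv
  have hbias : Tendsto (fun K j => √(a K + 1) / (a K - J) * (J * α j - 1)) atTop (𝓝 0) :=
    tendsto_pi_nhds.mpr fun j => by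
      simpa using (tendsto_sqrt_add_one_div_sub hatop J).mul_const (J * α j - 1)
  have hT := fun K => measurable_countVec (K := K) (hUmeas K) (hPimeas K)
  rw [tendstoInDistr_iff_tendstoInDistribution fun K => by have := hT K; fun_prop]
  refine tendstoInDistribution_of_tendstoInMeasure_sub _ _
    (hYconv.smul_add_of_tendsto (tendsto_sqrt_add_one_div_sqrt hatop) hbias) ?_
    fun K => by have := hT K; fun_prop
  have ha0 : ∀ K, 0 < a K := fun K => J.cast_nonneg.trans_lt (ha K)
  have hs : Tendsto (fun K : ℕ => √(a K + 1) ^ 2 / K) atTop (𝓝 0) := by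
    have hsq : ∀ K, √(a K + 1) ^ 2 = a K + 1 := fun K => Real.sq_sqrt (by linarith [ha0 K])
    simp_rw [hsq, add_div]
    simpa using haK.add tendsto_one_div_atTop_nhds_zero_nat
  refine (tendstoInMeasure_scaled_countVec_sub hUmeas hUunif hUiid hPimeas hPival hUPiindep
    hs).congr' ?_ EventuallyEq.rfl
  -- for `K ≠ 0` the remainder `X_K - (c_K • Y_K + b_K)` is exactly the multinomial noise
  filter_upwards [eventually_ne_atTop 0] with K hK
  refine ae_of_all _ fun ω => funext fun j => ?_
  have hsqrt : √(a K) ≠ 0 := (Real.sqrt_pos.mpr (ha0 K)).ne'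
  have haJ : a K - J ≠ 0 := sub_ne_zero.mpr (ha K).ne'
  simp only [_root_.Pi.sub_apply, _root_.Pi.add_apply, _root_.Pi.smul_apply, smul_eq_mul]
  field_simp
  ring

/-- **Corollary 2.** If `α_K > J`, `α_K → ∞`, `α_K/K → 0` and
`√(α_K)(Π_K − (α_K·α̃ − 1_J)/(α_K − J)) ⇝ N(0, diag(α̃) − α̃α̃ᵀ)`, then
`(√(α_K + 1)/K)(T_K − K·α̃) ⇝ N(0, diag(α̃) − α̃α̃ᵀ)`. -/
theorem dirichlet_multinomial_clt_mixing_dominates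
    {Ω : Type*} [MeasurableSpace Ω] (Pr : Measure Ω) [IsProbabilityMeasure Pr]
    (J : ℕ) (hJ : 2 ≤ J) (α : Fin J → ℝ) (hα : α ∈ stdSimplex ℝ (Fin J))
    (a : ℕ → ℝ) (ha : ∀ K, (J : ℝ) < a K)
    (hatop : Tendsto a atTop atTop)
    (haK : Tendsto (fun K : ℕ => a K / K) atTop (𝓝 0))
    (Pi : ℕ → Ω → Fin J → ℝ) (hPimeas : ∀ K, Measurable (Pi K))
    (hPival : ∀ K ω, Pi K ω ∈ stdSimplex ℝ (Fin J))
    (D : Measure (Fin J → ℝ))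
    (hD : IsCenteredGaussian D (Matrix.diagonal α - Matrix.vecMulVec α α))
    (hPiconv : TendstoInDistr Pr
      (fun K ω j => Real.sqrt (a K) * (Pi K ω j - (a K * α j - 1) / (a K - J))) D)
    (U : ℕ → ℕ → Ω → ℝ) (hUmeas : ∀ K k, Measurable (U K k))
    (hUunif : ∀ K k, Pr.map (U K k) = volume.restrict (Set.Icc (0:ℝ) 1))
    (hUiid : ∀ K, iIndepFun (U K) Pr)
    (hUPiindep : ∀ K, IndepFun (fun ω k => U K k ω) (Pi K) Pr) :
    TendstoInDistr Pr
      (fun K ω j =>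
        Real.sqrt (a K + 1) / K * (countVec K (U K) (Pi K) ω j - K * α j)) D :=
  dirichlet_multinomial_clt_mixing_dominates_general Pr J α a ha hatop haK Pi hPimeas hPival D
    hPiconv U hUmeas hUunif hUiid hUPiindep
end
end

section
/- Let J ≥ 2, let α ∈ S^{J-1}, and fix 1 ≤ j ≤ J and K ∈ ℕ. Let Π be an integrable random vector taking values in S^{J-1} and let U_1, …, U_K be i.i.d. Uniform(0,1) random variables independent of Π. Define S = K^{-1/2}·Σ_{k=1}^K 1(U_k ∈ P_j(Π) \ P_j(α)). Then E(S) ≤ 2·√(K·J)·E(‖Π − α‖), where ‖·‖ is the Euclidean norm. -/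
/-
By linearity and since `K / √K = √K`, it suffices to show
`E 1(U_k ∈ P_j(Π) \ P_j(α)) ≤ 2√J E‖Π − α‖` for each `k`. As `U_k` is independent of `Π` and its
law is dominated by Lebesgue measure, Fubini bounds the left side by the expected length of
`P_j(Π) \ P_j(α)`. That set lies between the left endpoints of `P_j(Π)` and `P_j(α)` or between
their right endpoints, so its length is at most `|∑_{ℓ<j} (Π_ℓ - α_ℓ)| + |∑_{ℓ≤j} (Π_ℓ - α_ℓ)|`,
and by Cauchy–Schwarz each partial sum is at most `√J ‖Π − α‖`.
-/

open MeasureTheory ProbabilityTheory Filter Topology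

noncomputable section

theorem abs_sum_le_sqrt_card_mul_sqrt_sum_sq {ι : Type*} [Fintype ι] (s : Finset ι) (x : ι → ℝ) :
    |∑ i ∈ s, x i| ≤ √(Fintype.card ι) * √(∑ i, x i ^ 2) := by
  rw [← Real.sqrt_mul (Nat.cast_nonneg _)]
  refine Real.abs_le_sqrt ((sq_sum_le_card_mul_sum_sq (s := s) (f := x)).trans ?_)
  exact mul_le_mul (mod_cast Finset.card_le_univ s)
    (Finset.sum_le_univ_sum_of_nonneg fun i => sq_nonneg (x i))
    (Finset.sum_nonneg fun i _ => sq_nonneg (x i)) (Nat.cast_nonneg _)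

theorem integrable_sqrt_sum_sq_sub {Ω ι : Type*} [MeasurableSpace Ω] [Fintype ι] {P : Measure Ω}
    [IsFiniteMeasure P] {X : Ω → ι → ℝ} (hX : Integrable X P) (a : ι → ℝ) :
    Integrable (fun ω => √(∑ i, (X ω i - a i) ^ 2)) P := by
  have := ((EuclideanSpace.equiv ι ℝ).symm.toContinuousLinearMap.integrable_comp
    (hX.sub (integrable_const a))).norm
  simpa [EuclideanSpace.norm_eq] using this

theorem ProbabilityTheory.IndepFun.integral_comp_prod_eq {Ω 𝓧 𝓨 E : Type*} [MeasurableSpace Ω]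
    [MeasurableSpace 𝓧] [MeasurableSpace 𝓨] [NormedAddCommGroup E] [NormedSpace ℝ E]
    {P : Measure Ω} [IsFiniteMeasure P] {X : Ω → 𝓧} {Y : Ω → 𝓨} (hXY : IndepFun X Y P)
    (hX : AEMeasurable X P) (hY : AEMeasurable Y P) {f : 𝓧 × 𝓨 → E}
    (hf : Integrable f ((P.map X).prod (P.map Y))) :
    ∫ ω, f (X ω, Y ω) ∂P = ∫ ω, ∫ x, f (x, Y ω) ∂(P.map X) ∂P := by
  have hmap := (indepFun_iff_map_prod_eq_prod_map_map hX hY).mp hXY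
  calc ∫ ω, f (X ω, Y ω) ∂P = ∫ p, f p ∂(P.map fun ω => (X ω, Y ω)) :=
        (integral_map (hX.prodMk hY) (hmap ▸ hf.aestronglyMeasurable)).symm
    _ = ∫ y, ∫ x, f (x, y) ∂(P.map X) ∂(P.map Y) := by rw [hmap, integral_prod_symm f hf]
    _ = ∫ ω, ∫ x, f (x, Y ω) ∂(P.map X) ∂P :=
        integral_map hY hf.integral_prod_right.aestronglyMeasurable

theorem Pint_sdiff_subset_uIoc_union {J : ℕ} (h α : Fin J → ℝ) (j : Fin J) :
    Pint h j \ Pint α j ⊆ Set.uIoc (∑ ℓ ∈ Finset.Iio j, α ℓ) (∑ ℓ ∈ Finset.Iio j, h ℓ) ∪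
      Set.uIoc (∑ ℓ ∈ Finset.Iic j, α ℓ) (∑ ℓ ∈ Finset.Iic j, h ℓ) := by
  rintro x ⟨hxh, hxα⟩
  unfold Pint at hxh hxα
  split_ifs at hxh hxα
  · simp only [Set.mem_Icc, not_and, not_le] at hxh hxα
    exact Or.inr ⟨min_le_left _ _ |>.trans_lt (hxα hxh.1), hxh.2.trans (le_max_right _ _)⟩
  · simp only [Set.mem_Ioc, not_and, not_le] at hxh hxα
    by_cases hx : ∑ ℓ ∈ Finset.Iio j, α ℓ < x
    · exact Or.inr ⟨min_le_left _ _ |>.trans_lt (hxα hx), hxh.2.trans (le_max_right _ _)⟩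
    · exact Or.inl ⟨min_le_right _ _ |>.trans_lt hxh.1, (not_lt.mp hx).trans (le_max_left _ _)⟩

theorem volume_Pint_sdiff_le {J : ℕ} (h α : Fin J → ℝ) (j : Fin J) :
    volume (Pint h j \ Pint α j) ≤ ENNReal.ofReal (2 * √J * √(∑ ℓ, (h ℓ - α ℓ) ^ 2)) := by
  have hIio := abs_sum_le_sqrt_card_mul_sqrt_sum_sq (Finset.Iio j) (h - α)
  have hIic := abs_sum_le_sqrt_card_mul_sqrt_sum_sq (Finset.Iic j) (h - α)
  simp only [Pi.sub_apply, Fintype.card_fin, Finset.sum_sub_distrib] at hIio hIic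
  calc volume (Pint h j \ Pint α j)
      ≤ volume (Set.uIoc (∑ ℓ ∈ Finset.Iio j, α ℓ) (∑ ℓ ∈ Finset.Iio j, h ℓ)) +
          volume (Set.uIoc (∑ ℓ ∈ Finset.Iic j, α ℓ) (∑ ℓ ∈ Finset.Iic j, h ℓ)) :=
        (measure_mono (Pint_sdiff_subset_uIoc_union h α j)).trans (measure_union_le _ _)
    _ ≤ _ := by
        rw [Real.volume_uIoc, Real.volume_uIoc, ← ENNReal.ofReal_add (abs_nonneg _) (abs_nonneg _)]
        exact ENNReal.ofReal_le_ofReal (by linarith)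

theorem measurableSet_setOf_mem_Pint {J : ℕ} (j : Fin J) :
    MeasurableSet {p : ℝ × (Fin J → ℝ) | p.1 ∈ Pint p.2 j} := by
  have hsum (s : Finset (Fin J)) : Measurable fun p : ℝ × (Fin J → ℝ) => ∑ ℓ ∈ s, p.2 ℓ :=
    Finset.measurable_sum _ fun ℓ _ => measurable_snd.eval
  unfold Pint
  split_ifs
  · exact (measurableSet_le measurable_const measurable_fst).inter
      (measurableSet_le measurable_fst (hsum _))
  · exact (measurableSet_lt (hsum _) measurable_fst).inter
      (measurableSet_le measurable_fst (hsum _))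

theorem measurableSet_setOf_mem_Pint_sdiff {J : ℕ} (α : Fin J → ℝ) (j : Fin J) :
    MeasurableSet {p : ℝ × (Fin J → ℝ) | p.1 ∈ Pint p.2 j \ Pint α j} :=
  (measurableSet_setOf_mem_Pint j).diff
    (measurable_fst ((measurableSet_setOf_mem_Pint j).preimage (measurable_prodMk_right (y := α))))

open Classical in
theorem ite_mem_Pint_sdiff_eq_indicator {J : ℕ} (α h : Fin J → ℝ) (j : Fin J) (x : ℝ) :
    (if x ∈ Pint h j \ Pint α j then (1:ℝ) else 0) =
      {p : ℝ × (Fin J → ℝ) | p.1 ∈ Pint p.2 j \ Pint α j}.indicator 1 (x, h) := by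
  simp only [Set.indicator_apply, Set.mem_ofPred_eq, Pi.one_apply]

open Classical in
theorem integrable_ite_mem_Pint_sdiff {Ω : Type*} [MeasurableSpace Ω] {P : Measure Ω}
    [IsFiniteMeasure P] {J : ℕ} (α : Fin J → ℝ) (j : Fin J) {V : Ω → ℝ} {Pi : Ω → Fin J → ℝ}
    (hV : AEMeasurable V P) (hPi : AEMeasurable Pi P) :
    Integrable (fun ω => if V ω ∈ Pint (Pi ω) j \ Pint α j then (1:ℝ) else 0) P := by
  simp only [ite_mem_Pint_sdiff_eq_indicator]
  exact ((integrable_const (1:ℝ)).indicator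
    (measurableSet_setOf_mem_Pint_sdiff α j)).comp_aemeasurable (hV.prodMk hPi)

open Classical in
theorem integral_ite_mem_Pint_sdiff_le {Ω : Type*} [MeasurableSpace Ω] (P : Measure Ω)
    [IsProbabilityMeasure P] {J : ℕ} (α : Fin J → ℝ) (j : Fin J) {V : Ω → ℝ} {Pi : Ω → Fin J → ℝ}
    (hV : AEMeasurable V P) (hPi : Integrable Pi P) (hVlaw : P.map V ≤ volume)
    (hVPi : IndepFun V Pi P) :
    ∫ ω, (if V ω ∈ Pint (Pi ω) j \ Pint α j then (1:ℝ) else 0) ∂P ≤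
      2 * √J * ∫ ω, √(∑ ℓ, (Pi ω ℓ - α ℓ) ^ 2) ∂P := by
  set s := {p : ℝ × (Fin J → ℝ) | p.1 ∈ Pint p.2 j \ Pint α j}
  have hs : MeasurableSet s := measurableSet_setOf_mem_Pint_sdiff α j
  calc ∫ ω, (if V ω ∈ Pint (Pi ω) j \ Pint α j then (1:ℝ) else 0) ∂P
      = ∫ ω, ∫ x, s.indicator 1 (x, Pi ω) ∂(P.map V) ∂P := by
        simp only [ite_mem_Pint_sdiff_eq_indicator]
        exact hVPi.integral_comp_prod_eq hV hPi.aemeasurable ((integrable_const (1:ℝ)).indicator hs)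
    _ = ∫ ω, (P.map V).real (Pint (Pi ω) j \ Pint α j) ∂P := by
        congr! 2 with ω
        exact integral_indicator_one (hs.preimage measurable_prodMk_right)
    _ ≤ ∫ ω, 2 * √J * √(∑ ℓ, (Pi ω ℓ - α ℓ) ^ 2) ∂P := by
        refine integral_mono_of_nonneg (ae_of_all _ fun _ => measureReal_nonneg)
          ((integrable_sqrt_sum_sq_sub hPi α).const_mul _) (ae_of_all _ fun ω => ?_)
        exact ENNReal.toReal_le_of_le_ofReal (by positivity)
          ((hVlaw _).trans (volume_Pint_sdiff_le _ α j))
    _ = 2 * √J * ∫ ω, √(∑ ℓ, (Pi ω ℓ - α ℓ) ^ 2) ∂P := integral_const_mul _ _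

open Classical in
theorem expectation_sdiff_indicator_sum_le_general
    {Ω : Type*} [MeasurableSpace Ω] (Pr : Measure Ω) [IsProbabilityMeasure Pr]
    (J : ℕ) (α : Fin J → ℝ)
    (j : Fin J) (K : ℕ)
    (Pi : Ω → Fin J → ℝ)
    (hPiint : Integrable Pi Pr)
    (U : ℕ → Ω → ℝ) (hUmeas : ∀ k, Measurable (U k))
    (hUunif : ∀ k, Pr.map (U k) = volume.restrict (Set.Icc (0:ℝ) 1))
    (hUPiindep : IndepFun (fun ω k => U k ω) Pi Pr) :
    ∫ ω, (∑ k ∈ Finset.range K,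
        if U k ω ∈ Pint (Pi ω) j \ Pint α j then (1:ℝ) else 0) / Real.sqrt K ∂Pr ≤
      2 * Real.sqrt (K * J) * ∫ ω, Real.sqrt (∑ ℓ, (Pi ω ℓ - α ℓ) ^ 2) ∂Pr := by
  set E := ∫ ω, √(∑ ℓ, (Pi ω ℓ - α ℓ) ^ 2) ∂Pr
  have hsample (k : ℕ) :
      ∫ ω, (if U k ω ∈ Pint (Pi ω) j \ Pint α j then (1:ℝ) else 0) ∂Pr ≤ 2 * √J * E :=
    integral_ite_mem_Pint_sdiff_le Pr α j (hUmeas k).aemeasurable hPiint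
      ((hUunif k).trans_le Measure.restrict_le_self)
      (hUPiindep.comp (measurable_pi_apply k) measurable_id)
  rw [integral_div, integral_finsetSum _ fun k _ =>
    integrable_ite_mem_Pint_sdiff α j (hUmeas k).aemeasurable hPiint.aemeasurable]
  calc (∑ k ∈ Finset.range K,
        ∫ ω, (if U k ω ∈ Pint (Pi ω) j \ Pint α j then (1:ℝ) else 0) ∂Pr) / √K
      ≤ K * (2 * √J * E) / √K := by
        gcongr
        simpa using Finset.sum_le_card_nsmul (Finset.range K) _ _ fun k _ => hsample k
    _ = 2 * √(K * J) * E := by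
        rw [Real.sqrt_mul (Nat.cast_nonneg _), mul_div_right_comm, Real.div_sqrt]
        ring

open Classical in
/-- For `S = K^{-1/2}·Σ_{k=1}^K 1(U_k ∈ P_j(Π) \ P_j(α))` one has
`E(S) ≤ 2·√(K·J)·E‖Π − α‖`. -/
theorem expectation_sdiff_indicator_sum_le
    {Ω : Type*} [MeasurableSpace Ω] (Pr : Measure Ω) [IsProbabilityMeasure Pr]
    (J : ℕ) (hJ : 2 ≤ J) (α : Fin J → ℝ) (hα : α ∈ stdSimplex ℝ (Fin J))
    (j : Fin J) (K : ℕ)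
    (Pi : Ω → Fin J → ℝ) (hPimeas : Measurable Pi)
    (hPival : ∀ ω, Pi ω ∈ stdSimplex ℝ (Fin J))
    (hPiint : Integrable Pi Pr)
    (U : ℕ → Ω → ℝ) (hUmeas : ∀ k, Measurable (U k))
    (hUunif : ∀ k, Pr.map (U k) = volume.restrict (Set.Icc (0:ℝ) 1))
    (hUiid : iIndepFun U Pr)
    (hUPiindep : IndepFun (fun ω k => U k ω) Pi Pr) :
    ∫ ω, (∑ k ∈ Finset.range K,
        if U k ω ∈ Pint (Pi ω) j \ Pint α j then (1:ℝ) else 0) / Real.sqrt K ∂Pr ≤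
      2 * Real.sqrt (K * J) * ∫ ω, Real.sqrt (∑ ℓ, (Pi ω ℓ - α ℓ) ^ 2) ∂Pr :=
  expectation_sdiff_indicator_sum_le_general Pr J α j K Pi hPiint U hUmeas hUunif hUPiindep

end
end
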